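/- arXiv:0905.3890 — 3 statements merged into one kernel-verified Lean document; each statement's English description precedes it below -/
import Mathlib

section
/- Green-type regularity lemma for sparse Cayley graphs: Let α, ε ∈ (0,1). There exists σ = σ(ε,α) > 0 such that if R ⊆ V = F_p^n is σ-regular and A ⊆ R has |A| = α|R|, then there is a subspace H ≤ V of index at most W(4ε^{-3}α^{-2}) which is ε-regular for A, where W is the tower function W(1) = 2p, W(t) = (2p)^{W(t-1)}. One may take σ = (2 W(4ε^{-3}α^{-2}))^{-1}. -/
open Finset

/-- `e(z) = e^{2πiz}`. -/
noncomputable def eC (z : ℝ) : ℂ := Complex.exp (2 * Real.pi * Complex.I * z)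

/-- `⟨x,ξ⟩ = (Σ_i x_i ξ_i)/p` as a real number. -/
noncomputable def bracket (p n : ℕ) (x ξ : Fin n → ZMod p) : ℝ :=
  ((∑ i, x i * ξ i : ZMod p).val : ℝ) / p

/-- Fourier transform over `V = F_p^n`: `f̂(ξ) = E_{x∈V} f(x) e(-⟨x,ξ⟩)`. -/
noncomputable def ft (p n : ℕ) [NeZero p] (f : (Fin n → ZMod p) → ℂ) (ξ : Fin n → ZMod p) : ℂ :=
  (Fintype.card (Fin n → ZMod p) : ℂ)⁻¹ * ∑ x, f x * eC (-(bracket p n x ξ))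

open Classical in
/-- Fourier transform with respect to a subspace `H`:
`f̂(ξ) = E_{x∈H} f(x) e(-⟨x,ξ⟩)`. -/
noncomputable def ftH (p n : ℕ) [NeZero p] (H : Submodule (ZMod p) (Fin n → ZMod p))
    (f : (Fin n → ZMod p) → ℂ) (ξ : Fin n → ZMod p) : ℂ :=
  (Nat.card H : ℂ)⁻¹ * ∑ x ∈ Finset.univ.filter (· ∈ H), f x * eC (-(bracket p n x ξ))

open Classical in
/-- The indicator function of `A_H^v = (A+v) ∩ H` (as a function on `V`, supported on `H`). -/
noncomputable def indAH (p n : ℕ) (A : Set (Fin n → ZMod p))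
    (H : Submodule (ZMod p) (Fin n → ZMod p)) (v x : Fin n → ZMod p) : ℂ :=
  if x ∈ H ∧ x - v ∈ A then 1 else 0

open Classical in
/-- `|A_H^v|`, the cardinality of `(A+v) ∩ H`. -/
noncomputable def cardAH (p n : ℕ) [NeZero p] (A : Set (Fin n → ZMod p))
    (H : Submodule (ZMod p) (Fin n → ZMod p)) (v : Fin n → ZMod p) : ℕ :=
  (Finset.univ.filter (fun x => x ∈ H ∧ x - v ∈ A)).card
/-- `v` is an ε-regular vector for `A` with respect to `H`:
`sup_{ξ∉H^⊥} |Â_H^v(ξ)| ≤ ε|A|/N`. -/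
def regVec (p n : ℕ) [NeZero p] (ε : ℝ) (A : Finset (Fin n → ZMod p))
    (H : Submodule (ZMod p) (Fin n → ZMod p)) (v : Fin n → ZMod p) : Prop :=
  ∀ ξ : Fin n → ZMod p, ¬ (∀ h ∈ H, (∑ i, h i * ξ i : ZMod p) = 0) →
    ‖ftH p n H (indAH p n (↑A) H v) ξ‖ ≤ ε * A.card / (Fintype.card (Fin n → ZMod p) : ℝ)

/-- The normalized mean-square density
`d(A,H) = (1/N) Σ_{v∈V} (|A_H^v|/|H|)² / (|A|/N)²`. -/
noncomputable def dens (p n : ℕ) [NeZero p] (A : Finset (Fin n → ZMod p))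
    (H : Submodule (ZMod p) (Fin n → ZMod p)) : ℝ :=
  (Fintype.card (Fin n → ZMod p) : ℝ)⁻¹ *
    ∑ v : Fin n → ZMod p,
      ((cardAH p n (↑A) H v : ℝ) / (Nat.card H : ℝ)) ^ 2
        / ((A.card : ℝ) / (Fintype.card (Fin n → ZMod p) : ℝ)) ^ 2

/-- The tower function `W(1) = 2p`, `W(t+1) = (2p)^{W(t)}` (indexed from 0 here,
so `tower p 0 = 2p` plays the role of `W(1)`). -/
def tower (p : ℕ) : ℕ → ℕ
  | 0 => 2 * p
  | t + 1 => (2 * p) ^ tower p t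


/-!
Energy increment. Measure a subspace `H` by the normalised mean square `dens A H` of the densities
`|A_H^v| / |H|`; it equals `1` for `H = V`. If more than `εN` vectors are irregular, choose one
witnessing character per coset of `H` and pass to the subspace `H' ≤ H` they all annihilate: the
index grows from `T` to at most `T p^T ≤ (2p)^T`, and Bessel's inequality on each coset `v + H`,
for the constant function and the witnessing character, raises `dens` by at least `ε³`. As long as
`|H| ≥ σN`, the σ-regularity of `R ⊇ A` caps `dens A H` by `2|R|/|A| = 2/α`, and
`1 + 4/α² > 2/α` forces a regular subspace within `⌈4ε⁻³α⁻²⌉` steps.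
-/

open scoped Classical

theorem two_div_lt_one_add_four_div_sq (α : ℝ) : 2 / α < 1 + 4 / α ^ 2 := by
  nlinarith [sq_nonneg (2 / α - 1 / 2), show (2 / α) ^ 2 = 4 / α ^ 2 by ring]

theorem sq_sum_add_sq_sum_mul_le {ι : Type*} (s : Finset ι) (g w : ι → ℝ)
    (hw : ∑ i ∈ s, w i = 0) (hw1 : ∀ i ∈ s, w i ^ 2 ≤ 1) :
    (∑ i ∈ s, g i) ^ 2 + (∑ i ∈ s, g i * w i) ^ 2 ≤ #s * ∑ i ∈ s, g i ^ 2 := by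
  set S := ∑ i ∈ s, g i
  set B := ∑ i ∈ s, g i * w i
  set m : ℝ := (#s : ℝ)
  have hw2 : ∑ i ∈ s, w i ^ 2 ≤ m := by
    simpa using Finset.sum_le_sum hw1
  have expand : ∑ i ∈ s, (m * g i - S - B * w i) ^ 2
      = m ^ 2 * ∑ i ∈ s, g i ^ 2 - m * S ^ 2 - 2 * m * B ^ 2 + B ^ 2 * ∑ i ∈ s, w i ^ 2 := by
    have h (i : ι) : (m * g i - S - B * w i) ^ 2 = m ^ 2 * g i ^ 2 + S ^ 2 + B ^ 2 * w i ^ 2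
        - 2 * m * S * g i - 2 * m * B * (g i * w i) + 2 * S * B * w i := by ring
    simp only [h, Finset.sum_add_distrib, Finset.sum_sub_distrib, ← Finset.mul_sum, hw,
      Finset.sum_const, nsmul_eq_mul]
    ring
  have hnonneg : 0 ≤ m * (m * ∑ i ∈ s, g i ^ 2 - S ^ 2 - B ^ 2) :=
    calc 0 ≤ ∑ i ∈ s, (m * g i - S - B * w i) ^ 2 := Finset.sum_nonneg fun i _ => sq_nonneg _
      _ = _ := expand
      _ ≤ _ := by nlinarith [mul_le_mul_of_nonneg_left hw2 (sq_nonneg B)]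
  rcases (Nat.cast_nonneg #s : (0:ℝ) ≤ m).eq_or_lt with hm | hm
  · have : s = ∅ := by simpa [m] using hm.symm
    simp [this, S, B]
  · linarith [nonneg_of_mul_nonneg_right hnonneg hm]

theorem sq_sum_add_sq_norm_sum_mul_le {ι : Type*} [Fintype ι] (g : ι → ℝ) (χ : ι → ℂ)
    (hχ : ∀ i, ‖χ i‖ = 1) (hχ0 : ∑ i, χ i = 0) :
    (∑ i, g i) ^ 2 + ‖∑ i, g i * χ i‖ ^ 2 ≤ Fintype.card ι * ∑ i, g i ^ 2 := by
  set T := ∑ i, g i * χ i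
  -- `χ` rotated so that its correlation with `g` becomes the real number `‖T‖`
  set w : ι → ℝ := fun i => (starRingEnd ℂ T * χ i).re / ‖T‖
  have hw : ∑ i, w i = 0 := by
    simp only [w, ← Finset.sum_div, ← Complex.re_sum, ← Finset.mul_sum, hχ0, mul_zero,
      Complex.zero_re, zero_div]
  have hw1 (i : ι) : w i ^ 2 ≤ 1 := by
    have : |(starRingEnd ℂ T * χ i).re| ≤ ‖T‖ := by
      simpa [hχ i] using Complex.abs_re_le_norm (starRingEnd ℂ T * χ i)
    rw [div_pow]
    exact div_le_one_of_le₀ (sq_le_sq' (abs_le.mp this).1 (abs_le.mp this).2) (sq_nonneg _)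
  have hgw : ∑ i, g i * w i = ‖T‖ := by
    have : ∑ i, g i * w i = (starRingEnd ℂ T * T).re / ‖T‖ := by
      simp only [w, T, Finset.mul_sum, Complex.re_sum, Finset.sum_div]
      refine Finset.sum_congr rfl fun i _ => ?_
      rw [mul_left_comm, Complex.re_ofReal_mul, mul_div_assoc]
    rw [this, Complex.conj_mul', ← Complex.ofReal_pow, Complex.ofReal_re, sq, mul_self_div_self]
  have := sq_sum_add_sq_sum_mul_le Finset.univ g w hw fun i _ => hw1 i
  rwa [hgw, Finset.card_univ] at this

lemma card_quotient_inf_iInf_ker_le {p : ℕ} [NeZero p] {M ι : Type*} [AddCommGroup M]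
    [Module (ZMod p) M] [Fintype ι] (H : Submodule (ZMod p) M) (f : ι → Module.Dual (ZMod p) M) :
    Nat.card (M ⧸ (H ⊓ ⨅ i, LinearMap.ker (f i))) ≤ Nat.card (M ⧸ H) * p ^ Fintype.card ι := by
  have hker (i : ι) : (LinearMap.ker (f i)).toAddSubgroup.index ≤ p := by
    have : (LinearMap.ker (f i)).toAddSubgroup = (f i).toAddMonoidHom.ker := by ext; simp
    rw [this, AddSubgroup.index_ker]
    simpa using Finite.card_subtype_le (· ∈ (f i).toAddMonoidHom.range)
  have : (H ⊓ ⨅ i, LinearMap.ker (f i)).toAddSubgroup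
      = H.toAddSubgroup ⊓ ⨅ i, (LinearMap.ker (f i)).toAddSubgroup := by ext; simp
  change (H ⊓ ⨅ i, LinearMap.ker (f i)).toAddSubgroup.index ≤ H.toAddSubgroup.index * _
  rw [this]
  calc _ ≤ H.toAddSubgroup.index * (⨅ i, (LinearMap.ker (f i)).toAddSubgroup).index :=
        AddSubgroup.index_inf_le
    _ ≤ H.toAddSubgroup.index * ∏ i, (LinearMap.ker (f i)).toAddSubgroup.index :=
        Nat.mul_le_mul_left _ (AddSubgroup.index_iInf_le _)
    _ ≤ H.toAddSubgroup.index * p ^ Fintype.card ι :=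
        Nat.mul_le_mul_left _ (Finset.prod_le_pow_card _ _ _ fun i _ => hker i)

section
variable {p n : ℕ} [NeZero p]

local notation "V" => Fin n → ZMod p

noncomputable def dualChar (ξ : V) : AddChar V ℂ :=
  ZMod.stdAddChar.compAddMonoidHom (-(dotProductEquiv (ZMod p) (Fin n) ξ).toAddMonoidHom)

lemma dualChar_apply (ξ x : V) : dualChar ξ x = ZMod.stdAddChar (-(x ⬝ᵥ ξ)) := by
  simp [dualChar, dotProduct_comm ξ x]

lemma dualChar_eq_eC (ξ x : V) : dualChar ξ x = eC (-bracket p n x ξ) := by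
  rw [dualChar_apply, AddChar.map_neg_eq_inv, ZMod.stdAddChar_apply, ZMod.toCircle_apply, eC,
    bracket, ← Complex.exp_neg]
  congr 1
  push_cast [dotProduct]
  ring

lemma dualChar_eq_one {ξ x : V} (h : ∑ i, x i * ξ i = 0) : dualChar ξ x = 1 := by
  rw [dualChar_apply, dotProduct, h, neg_zero, AddChar.map_zero_eq_one]

lemma norm_dualChar (ξ x : V) : ‖dualChar ξ x‖ = 1 := by
  rw [dualChar_apply, ZMod.stdAddChar_apply, Circle.norm_coe]

lemma sum_dualChar_eq_zero {H : Submodule (ZMod p) V} {ξ : V}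
    (hξ : ¬ ∀ h ∈ H, ∑ i, h i * ξ i = 0) : ∑ h : H, dualChar ξ h = 0 := by
  push Not at hξ
  obtain ⟨h₀, hh₀, hξh₀⟩ := hξ
  refine (AddChar.sum_eq_zero_iff_ne_zero
    (ψ := (dualChar ξ).compAddMonoidHom H.subtype.toAddMonoidHom)).mpr fun h0 => hξh₀ ?_
  have h1 : ZMod.stdAddChar (-(h₀ ⬝ᵥ ξ)) = ZMod.stdAddChar (0 : ZMod p) := by
    simpa [dualChar_apply] using congrArg (fun ψ : AddChar H ℂ => ψ ⟨h₀, hh₀⟩) h0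
  simpa [dotProduct] using ZMod.injective_stdAddChar h1

lemma ftH_eq_sum (H : Submodule (ZMod p) V) (f : V → ℂ) (ξ : V) :
    ftH p n H f ξ = (Nat.card H : ℂ)⁻¹ * ∑ h : H, f h * dualChar ξ h := by
  rw [ftH, Finset.sum_subtype (p := (· ∈ H)) (F := inferInstance) _ (fun x => by simp)]
  simp only [dualChar_eq_eC]

lemma sum_indAH_mul (A : Set V) (H : Submodule (ZMod p) V) (v : V) (g : V → ℂ) :
    ∑ x, indAH p n A H v x * g x = ∑ h : H, indAH p n A H v h * g h := by
  rw [← Finset.sum_filter_of_ne (p := (· ∈ H)) fun x _ hx => ?_,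
    Finset.sum_subtype (p := (· ∈ H)) (F := inferInstance) _ (fun x => by simp)]
  contrapose! hx
  simp [indAH, hx]

lemma cardAH_eq_sum (A : Set V) (H : Submodule (ZMod p) V) (v : V) :
    (cardAH p n A H v : ℂ) = ∑ h : H, indAH p n A H v h := by
  rw [cardAH, Finset.card_filter, Nat.cast_sum]
  simpa [indAH] using sum_indAH_mul A H v 1

lemma sum_cardAH_add_mul_dualChar (A : Set V) {H' H : Submodule (ZMod p) V} (hH' : H' ≤ H)
    {ξ : V} (hξ : ∀ x ∈ H', ∑ i, x i * ξ i = 0) (v : V) :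
    ∑ h : H, (cardAH p n A H' (v + h) : ℂ) * dualChar ξ h
      = Nat.card H' * ∑ z : H, indAH p n A H v z * dualChar ξ (-z) := by
  simp_rw [cardAH_eq_sum, Finset.sum_mul]
  -- for each `x ∈ H'`, substitute `h = x - z`; `dualChar ξ` is trivial on `H'`
  rw [Finset.sum_comm, Nat.card_eq_fintype_card, ← Finset.card_univ, ← nsmul_eq_mul,
    ← Finset.sum_const]
  refine Finset.sum_congr rfl fun x _ => ?_
  refine Fintype.sum_equiv (Equiv.subLeft ⟨x, hH' x.2⟩) _ _ fun h => ?_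
  have hψ : dualChar ξ (-((x : V) - h)) = dualChar ξ h := by
    rw [neg_sub, sub_eq_add_neg, AddChar.map_add_eq_mul, AddChar.map_neg_eq_inv,
      dualChar_eq_one (hξ x x.2), inv_one, mul_one]
  simp only [Equiv.subLeft_apply, AddSubgroupClass.coe_sub, hψ]
  congr 1
  simp [indAH, x.2, H.sub_mem (hH' x.2) h.2, sub_sub, add_comm (v : V)]

lemma sum_cardAH_add {A : Set V} {H' H : Submodule (ZMod p) V} (hH' : H' ≤ H) (v : V) :
    ∑ h : H, (cardAH p n A H' (v + h) : ℝ) = Nat.card H' * cardAH p n A H v := by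
  have h := sum_cardAH_add_mul_dualChar A hH' (ξ := 0) (fun _ _ => by simp) v
  have hψ (x : V) : dualChar (0 : V) x = 1 := dualChar_eq_one (by simp)
  simp only [hψ, mul_one, ← cardAH_eq_sum] at h
  exact_mod_cast h

lemma cardAH_top (A : Finset V) (v : V) : cardAH p n A ⊤ v = A.card := by
  refine Finset.card_nbij' (· - v) (· + v) ?_ ?_ ?_ ?_ <;> intro x hx <;> simp_all

lemma sum_cardAH (A : Finset V) (H : Submodule (ZMod p) V) :
    ∑ v, (cardAH p n A H v : ℝ) = A.card * Nat.card H := by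
  have h := sum_cardAH_add (A := (A : Set V)) (le_top : H ≤ ⊤) 0
  simp only [cardAH_top, zero_add] at h
  rw [mul_comm, ← h]
  exact (Fintype.sum_equiv (Equiv.subtypeUnivEquiv fun _ => Submodule.mem_top) _ _
    fun _ => rfl).symm

lemma cardAH_mono {A B : Set V} (hAB : A ⊆ B) (H : Submodule (ZMod p) V) (v : V) :
    cardAH p n A H v ≤ cardAH p n B H v :=
  Finset.card_le_card fun _ hx => by
    simp only [Finset.mem_filter] at hx ⊢
    exact ⟨hx.1, hx.2.1, hAB hx.2.2⟩

lemma norm_ftH_indAH_add (A : Set V) {H : Submodule (ZMod p) V} {h : V} (hh : h ∈ H)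
    (v ξ : V) :
    ‖ftH p n H (indAH p n A H (v + h)) ξ‖ = ‖ftH p n H (indAH p n A H v) ξ‖ := by
  have key : ∑ z : H, indAH p n A H (v + h) z * dualChar ξ z
      = dualChar ξ h * ∑ z : H, indAH p n A H v z * dualChar ξ z := by
    rw [Finset.mul_sum]
    refine Fintype.sum_equiv (Equiv.subRight ⟨h, hh⟩) _ _ fun z => ?_
    have hψ : dualChar ξ z = dualChar ξ h * dualChar ξ ((z : V) - h) := by
      rw [← AddChar.map_add_eq_mul, add_sub_cancel]
    simp [indAH, hψ, H.sub_mem z.2 hh, sub_sub, add_comm h]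
  rw [ftH_eq_sum, ftH_eq_sum, key, mul_left_comm, norm_mul, norm_dualChar, one_mul]

lemma regVec_add_iff {ε : ℝ} {A : Finset V} {H : Submodule (ZMod p) V} {h : V} (hh : h ∈ H)
    (v : V) : regVec p n ε A H (v + h) ↔ regVec p n ε A H v := by
  simp only [regVec, norm_ftH_indAH_add _ hh]

lemma regVec_empty (ε : ℝ) (H : Submodule (ZMod p) V) (v : V) : regVec p n ε ∅ H v := by
  intro ξ _
  simp [ftH, indAH]

lemma natCard_submodule_pos (H : Submodule (ZMod p) V) : (0 : ℝ) < Nat.card H :=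
  mod_cast Nat.card_pos

lemma norm_sum_indAH_mul_dualChar_neg (A : Set V) (H : Submodule (ZMod p) V) (v ξ : V) :
    ‖∑ z : H, indAH p n A H v z * dualChar ξ (-z)‖
      = Nat.card H * ‖ftH p n H (indAH p n A H v) ξ‖ := by
  have hconj : ∑ z : H, indAH p n A H v z * dualChar ξ (-z)
      = starRingEnd ℂ (∑ z : H, indAH p n A H v z * dualChar ξ z) := by
    simp only [map_sum, map_mul, ← AddChar.map_neg_eq_conj]
    refine Finset.sum_congr rfl fun z _ => ?_
    simp only [indAH]
    split_ifs <;> simp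
  rw [hconj, Complex.norm_conj, ftH_eq_sum, norm_mul, norm_inv, Complex.norm_natCast,
    mul_inv_cancel_left₀ (natCard_submodule_pos H).ne']

lemma sum_cardAH_add_div {A : Set V} {H' H : Submodule (ZMod p) V} (hH' : H' ≤ H) (v : V) :
    ∑ h : H, (cardAH p n A H' (v + h) : ℝ) / Nat.card H' = cardAH p n A H v := by
  rw [← Finset.sum_div, sum_cardAH_add hH', mul_div_cancel_left₀ _ (natCard_submodule_pos H').ne']

lemma sq_cardAH_div_le {A : Set V} {H' H : Submodule (ZMod p) V} (hH' : H' ≤ H) (v : V) :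
    ((cardAH p n A H v : ℝ) / Nat.card H) ^ 2
      ≤ (Nat.card H : ℝ)⁻¹ * ∑ h : H, ((cardAH p n A H' (v + h) : ℝ) / Nat.card H') ^ 2 := by
  have h := sq_sum_le_card_mul_sum_sq (s := Finset.univ)
    (f := fun h : H => (cardAH p n A H' (v + h) : ℝ) / Nat.card H')
  rw [sum_cardAH_add_div hH', Finset.card_univ, ← Nat.card_eq_fintype_card] at h
  have hH := natCard_submodule_pos H
  calc ((cardAH p n A H v : ℝ) / Nat.card H) ^ 2
      = (cardAH p n A H v : ℝ) ^ 2 / (Nat.card H : ℝ) ^ 2 := div_pow _ _ _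
    _ ≤ (Nat.card H : ℝ) * _ / (Nat.card H : ℝ) ^ 2 := by gcongr
    _ = _ := by field_simp

lemma sq_cardAH_div_add_sq_norm_ftH_le {A : Set V} {H' H : Submodule (ZMod p) V} (hH' : H' ≤ H)
    {ξ : V} (hξ' : ∀ x ∈ H', ∑ i, x i * ξ i = 0) (hξ : ¬ ∀ h ∈ H, ∑ i, h i * ξ i = 0) (v : V) :
    ((cardAH p n A H v : ℝ) / Nat.card H) ^ 2 + ‖ftH p n H (indAH p n A H v) ξ‖ ^ 2
      ≤ (Nat.card H : ℝ)⁻¹ * ∑ h : H, ((cardAH p n A H' (v + h) : ℝ) / Nat.card H') ^ 2 := by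
  have h := sq_sum_add_sq_norm_sum_mul_le
    (fun h : H => (cardAH p n A H' (v + h) : ℝ) / Nat.card H') (fun h => dualChar ξ h)
    (fun _ => norm_dualChar _ _) (sum_dualChar_eq_zero hξ)
  have hψ : ∑ h : H, (((cardAH p n A H' (v + h) : ℝ) / Nat.card H' : ℝ) : ℂ) * dualChar ξ h
      = ∑ z : H, indAH p n A H v z * dualChar ξ (-z) := by
    simp only [Complex.ofReal_div, Complex.ofReal_natCast, div_mul_eq_mul_div, ← Finset.sum_div,
      sum_cardAH_add_mul_dualChar A hH' hξ' v]
    have : (Nat.card H' : ℂ) ≠ 0 := Nat.cast_ne_zero.mpr Nat.card_pos.ne'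
    field_simp
  rw [sum_cardAH_add_div hH', hψ, norm_sum_indAH_mul_dualChar_neg, ← Nat.card_eq_fintype_card] at h
  have hH := natCard_submodule_pos H
  calc ((cardAH p n A H v : ℝ) / Nat.card H) ^ 2 + ‖ftH p n H (indAH p n A H v) ξ‖ ^ 2
      = ((cardAH p n A H v : ℝ) ^ 2 + (Nat.card H * ‖ftH p n H (indAH p n A H v) ξ‖) ^ 2)
          / (Nat.card H : ℝ) ^ 2 := by field_simp
    _ ≤ (Nat.card H : ℝ) * _ / (Nat.card H : ℝ) ^ 2 := by gcongr
    _ = _ := by field_simp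

lemma sum_sum_submodule_add (G : V → ℝ) (H : Submodule (ZMod p) V) :
    ∑ v, ∑ h : H, G (v + h) = Nat.card H * ∑ v, G v := by
  rw [Finset.sum_comm, Nat.card_eq_fintype_card, ← Finset.card_univ, ← nsmul_eq_mul,
    ← Finset.sum_const]
  exact Finset.sum_congr rfl fun h _ =>
    Fintype.sum_equiv (Equiv.addRight (h : V)) _ _ fun _ => rfl

lemma sum_sq_add_card_mul_sq_le {A : Set V} {H' H : Submodule (ZMod p) V} (hH' : H' ≤ H)
    {S : Finset V} {c : ℝ} (hc : 0 ≤ c)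
    (hS : ∀ v ∈ S, ∃ ξ : V, (∀ x ∈ H', ∑ i, x i * ξ i = 0) ∧ (¬ ∀ h ∈ H, ∑ i, h i * ξ i = 0) ∧
      c ≤ ‖ftH p n H (indAH p n A H v) ξ‖) :
    ∑ v, ((cardAH p n A H v : ℝ) / Nat.card H) ^ 2 + #S * c ^ 2
      ≤ ∑ v, ((cardAH p n A H' v : ℝ) / Nat.card H') ^ 2 := by
  have hlocal (v : V) : ((cardAH p n A H v : ℝ) / Nat.card H) ^ 2 + (if v ∈ S then c ^ 2 else 0)
      ≤ (Nat.card H : ℝ)⁻¹ * ∑ h : H, ((cardAH p n A H' (v + h) : ℝ) / Nat.card H') ^ 2 := by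
    split_ifs with hv
    · obtain ⟨ξ, hξ', hξ, hcξ⟩ := hS v hv
      grw [hcξ]
      exact sq_cardAH_div_add_sq_norm_ftH_le hH' hξ' hξ v
    · simpa using sq_cardAH_div_le hH' v
  calc _ = ∑ v, (((cardAH p n A H v : ℝ) / Nat.card H) ^ 2 + if v ∈ S then c ^ 2 else 0) := by
        rw [Finset.sum_add_distrib, Finset.sum_ite_mem, Finset.univ_inter, Finset.sum_const,
          nsmul_eq_mul]
    _ ≤ ∑ v, (Nat.card H : ℝ)⁻¹ * ∑ h : H, ((cardAH p n A H' (v + h) : ℝ) / Nat.card H') ^ 2 :=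
        Finset.sum_le_sum fun v _ => hlocal v
    _ = _ := by
        rw [← Finset.mul_sum,
          sum_sum_submodule_add (fun w => ((cardAH p n A H' w : ℝ) / Nat.card H') ^ 2),
          inv_mul_cancel_left₀ (natCard_submodule_pos H).ne']

lemma dens_eq (A : Finset V) (H : Submodule (ZMod p) V) :
    dens p n A H = Fintype.card V / (#A : ℝ) ^ 2
      * ∑ v, ((cardAH p n A H v : ℝ) / Nat.card H) ^ 2 := by
  have : (Fintype.card V : ℝ) ≠ 0 := Nat.cast_ne_zero.mpr Fintype.card_ne_zero
  unfold _root_.dens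
  rw [← Finset.sum_div, div_pow]
  field_simp

lemma natCard_top_eq_card : Nat.card (⊤ : Submodule (ZMod p) V) = Fintype.card V := by
  rw [Nat.card_congr Submodule.topEquiv.toEquiv, Nat.card_eq_fintype_card]

lemma dens_top {A : Finset V} (hA : A.Nonempty) : dens p n A ⊤ = 1 := by
  have : (Fintype.card V : ℝ) ≠ 0 := Nat.cast_ne_zero.mpr Fintype.card_ne_zero
  have : (#A : ℝ) ≠ 0 := Nat.cast_ne_zero.mpr hA.card_pos.ne'
  rw [dens_eq]
  simp only [cardAH_top, natCard_top_eq_card, Finset.sum_const, Finset.card_univ, nsmul_eq_mul]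
  field_simp

lemma dens_le_of_cardAH_le {A : Finset V} (hA : A.Nonempty) {H : Submodule (ZMod p) V} {K : ℝ}
    (hK : ∀ v, (cardAH p n A H v : ℝ) ≤ K * Nat.card H) :
    dens p n A H ≤ K * Fintype.card V / #A := by
  have hH := natCard_submodule_pos H
  have hterm (v : V) : ((cardAH p n A H v : ℝ) / Nat.card H) ^ 2
      ≤ K * ((cardAH p n A H v : ℝ) / Nat.card H) := by
    rw [sq]
    gcongr
    rw [div_le_iff₀ hH]
    exact hK v
  calc dens p n A H
      ≤ Fintype.card V / (#A : ℝ) ^ 2 * ∑ v, K * ((cardAH p n A H v : ℝ) / Nat.card H) := by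
        rw [dens_eq]; gcongr with v; exact hterm v
    _ = K * Fintype.card V / #A := by
        rw [← Finset.mul_sum, ← Finset.sum_div, sum_cardAH]
        have : (#A : ℝ) ≠ 0 := Nat.cast_ne_zero.mpr hA.card_pos.ne'
        field_simp

lemma dens_le_two_mul_card_div {R A : Finset V} (hA : A.Nonempty) (hAR : A ⊆ R)
    {H : Submodule (ZMod p) V}
    (hR : ∀ v, (cardAH p n R H v : ℝ) ≤ 2 * #R * Nat.card H / Fintype.card V) :
    dens p n A H ≤ 2 * #R / #A := by
  have hN : (0 : ℝ) < Fintype.card V := mod_cast Fintype.card_pos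
  have := dens_le_of_cardAH_le hA (K := 2 * #R / Fintype.card V) fun v =>
    (Nat.cast_le.mpr (cardAH_mono (Finset.coe_subset.mpr hAR) H v)).trans
      ((hR v).trans_eq (by ring))
  rwa [div_mul_cancel₀ _ hN.ne'] at this

lemma dens_add_pow_three_le {A : Finset V} (hA : A.Nonempty) {H' H : Submodule (ZMod p) V} (hH' : H' ≤ H)
    {ε : ℝ} (hε : 0 ≤ ε) {S : Finset V} (hSbig : ε * Fintype.card V ≤ #S)
    (hS : ∀ v ∈ S, ∃ ξ : V, (∀ x ∈ H', ∑ i, x i * ξ i = 0) ∧ (¬ ∀ h ∈ H, ∑ i, h i * ξ i = 0) ∧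
      ε * #A / Fintype.card V ≤ ‖ftH p n H (indAH p n A H v) ξ‖) :
    dens p n A H + ε ^ 3 ≤ dens p n A H' := by
  have hN : (0 : ℝ) < Fintype.card V := Nat.cast_pos.mpr Fintype.card_pos
  have hA0 : (0 : ℝ) < #A := Nat.cast_pos.mpr hA.card_pos
  have hinc := sum_sq_add_card_mul_sq_le hH' (by positivity) hS
  have hε3 : ε ^ 3 ≤ Fintype.card V / (#A : ℝ) ^ 2 * (#S * (ε * #A / Fintype.card V) ^ 2) := by
    calc ε ^ 3 = ε ^ 2 / Fintype.card V * (ε * Fintype.card V) := by field_simp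
      _ ≤ ε ^ 2 / Fintype.card V * #S := by gcongr
      _ = _ := by field_simp
  calc dens p n A H + ε ^ 3 ≤ Fintype.card V / (#A : ℝ) ^ 2
        * ∑ v, ((cardAH p n A H v : ℝ) / Nat.card H) ^ 2
        + Fintype.card V / (#A : ℝ) ^ 2 * (#S * (ε * #A / Fintype.card V) ^ 2) := by
        rw [dens_eq]; gcongr
    _ ≤ Fintype.card V / (#A : ℝ) ^ 2 * ∑ v, ((cardAH p n A H' v : ℝ) / Nat.card H') ^ 2 := by
        rw [← mul_add]; gcongr
    _ = dens p n A H' := (dens_eq A H').symm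

-- Irregularity is constant on cosets of `H` (`regVec_add_iff`), so one witness per coset suffices.
lemma exists_le_witnesses (ε : ℝ) (A : Finset V) (H : Submodule (ZMod p) V) :
    ∃ H' ≤ H, Nat.card (V ⧸ H') ≤ Nat.card (V ⧸ H) * p ^ Nat.card (V ⧸ H) ∧
      ∀ v, ¬ regVec p n ε A H v → ∃ ξ : V, (∀ x ∈ H', ∑ i, x i * ξ i = 0) ∧
        (¬ ∀ h ∈ H, ∑ i, h i * ξ i = 0) ∧
        ε * #A / Fintype.card V ≤ ‖ftH p n H (indAH p n A H v) ξ‖ := by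
  have hwit (q : V ⧸ H) : ∃ ξ : V, ¬ regVec p n ε A H q.out →
      (¬ ∀ h ∈ H, ∑ i, h i * ξ i = 0) ∧
      ε * #A / Fintype.card V ≤ ‖ftH p n H (indAH p n A H q.out) ξ‖ := by
    by_cases hq : regVec p n ε A H q.out
    · exact ⟨0, fun h => absurd hq h⟩
    · rw [regVec, not_forall] at hq
      obtain ⟨ξ, hq⟩ := hq
      rw [Classical.not_imp, not_le] at hq
      exact ⟨ξ, fun _ => ⟨hq.1, hq.2.le⟩⟩
  choose Ξ hΞ using hwit
  refine ⟨H ⊓ ⨅ q, LinearMap.ker (dotProductEquiv (ZMod p) (Fin n) (Ξ q)), inf_le_left, ?_,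
    fun v hv => ?_⟩
  · simpa [Nat.card_eq_fintype_card] using
      card_quotient_inf_iInf_ker_le H fun q => dotProductEquiv (ZMod p) (Fin n) (Ξ q)
  set q : V ⧸ H := Submodule.Quotient.mk v
  have hmem : v - q.out ∈ H := (Submodule.Quotient.eq H).mp (Submodule.Quotient.mk_out q).symm
  have hbad : ¬ regVec p n ε A H q.out := by
    rwa [← regVec_add_iff hmem, add_sub_cancel]
  obtain ⟨hξ, hle⟩ := hΞ q hbad
  refine ⟨Ξ q, fun x hx => ?_, hξ, ?_⟩
  · have := (Submodule.mem_iInf _).mp (Submodule.mem_inf.mp hx).2 q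
    simpa [dotProduct, mul_comm] using this
  · rwa [← norm_ftH_indAH_add _ hmem, add_sub_cancel] at hle

lemma tower_pos (j : ℕ) : 0 < tower p j := by
  cases j <;> simp [tower, Nat.pos_of_neZero]

lemma natCard_quotient_top_le_tower (j : ℕ) :
    Nat.card (V ⧸ (⊤ : Submodule (ZMod p) V)) ≤ tower p j := by
  rw [Nat.card_eq_fintype_card, Fintype.card_unique]
  exact tower_pos j

lemma mul_pow_le_tower_succ {T j : ℕ} (hT : T ≤ tower p j) : T * p ^ T ≤ tower p (j + 1) :=
  calc T * p ^ T ≤ 2 ^ T * p ^ T := Nat.mul_le_mul_right _ Nat.lt_two_pow_self.le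
    _ = (2 * p) ^ T := (Nat.mul_pow 2 p T).symm
    _ ≤ (2 * p) ^ tower p j :=
        Nat.pow_le_pow_right (Nat.mul_pos two_pos (Nat.pos_of_neZero p)) hT

lemma tower_mono : Monotone (tower p) :=
  monotone_nat_of_le_succ fun _ =>
    (Nat.le_mul_of_pos_right _ (Nat.pow_pos (Nat.pos_of_neZero p))).trans
      (mul_pow_le_tower_succ le_rfl)

noncomputable def irregularVectors (ε : ℝ) (A : Finset V) (H : Submodule (ZMod p) V) : Finset V :=
  univ.filter fun v => ¬ regVec p n ε A H v

lemma exists_index_le_tower {A : Finset V} (hA : A.Nonempty) {ε : ℝ} (hε : 0 ≤ ε) (j : ℕ) :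
    ∃ H : Submodule (ZMod p) V, Nat.card (V ⧸ H) ≤ tower p j ∧
      ((#(irregularVectors ε A H) : ℝ) ≤ ε * Fintype.card V ∨ 1 + j * ε ^ 3 ≤ dens p n A H) := by
  induction j with
  | zero => exact ⟨⊤, natCard_quotient_top_le_tower 0, Or.inr (by simp [dens_top hA])⟩
  | succ j ih =>
    obtain ⟨H, hidx, hH⟩ := ih
    by_cases hreg : (#(irregularVectors ε A H) : ℝ) ≤ ε * Fintype.card V
    · exact ⟨H, hidx.trans (tower_mono j.le_succ), Or.inl hreg⟩
    obtain ⟨H', hH', hidx', hwit⟩ := exists_le_witnesses ε A H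
    have hinc := dens_add_pow_three_le hA hH' hε (not_le.mp hreg).le fun v hv =>
      hwit v (Finset.mem_filter.mp hv).2
    refine ⟨H', hidx'.trans (mul_pow_le_tower_succ hidx), Or.inr ?_⟩
    push_cast
    linarith [hH.resolve_left hreg]

lemma inv_mul_card_le_natCard {H : Submodule (ZMod p) V} {T : ℕ} (hT : Nat.card (V ⧸ H) ≤ T) :
    (T : ℝ)⁻¹ * Fintype.card V ≤ Nat.card H := by
  have hidx : (0 : ℝ) < Nat.card (V ⧸ H) := mod_cast Nat.card_pos
  have hcard : (Fintype.card V : ℝ) = Nat.card H * Nat.card (V ⧸ H) := by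
    rw [← Nat.card_eq_fintype_card, Submodule.card_eq_card_quotient_mul_card H, Nat.cast_mul]
  rw [hcard, inv_mul_le_iff₀ (hidx.trans_le (mod_cast hT)), mul_comm]
  gcongr

end

open Classical in
theorem green_regularity_general {p : ℕ} [NeZero p]
    (α ε : ℝ) (hα : 0 < α) (hε : 0 < ε) :
    ∃ σ : ℝ, 0 < σ ∧
      ∀ (n : ℕ) (R A : Finset (Fin n → ZMod p)),
        (∀ (H : Submodule (ZMod p) (Fin n → ZMod p)) (v : Fin n → ZMod p),
          σ * (Fintype.card (Fin n → ZMod p) : ℝ) ≤ (Nat.card H : ℝ) →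
          (cardAH p n (↑R) H v : ℝ)
            ≤ 2 * R.card * (Nat.card H : ℝ) / (Fintype.card (Fin n → ZMod p) : ℝ)) →
        A ⊆ R → (A.card : ℝ) = α * R.card →
        ∃ H : Submodule (ZMod p) (Fin n → ZMod p),
          Nat.card ((Fin n → ZMod p) ⧸ H) ≤ tower p ⌈4 * ε⁻¹ ^ 3 * α⁻¹ ^ 2⌉₊ ∧
          ((Finset.univ.filter
              (fun v : Fin n → ZMod p => ¬ regVec p n ε A H v)).card : ℝ)
            ≤ ε * (Fintype.card (Fin n → ZMod p) : ℝ) := by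
  set t := ⌈4 * ε⁻¹ ^ 3 * α⁻¹ ^ 2⌉₊
  refine ⟨(tower p t : ℝ)⁻¹, inv_pos.mpr (mod_cast tower_pos t), fun n R A hR hAR hAR' => ?_⟩
  rcases A.eq_empty_or_nonempty with rfl | hA
  · exact ⟨⊤, natCard_quotient_top_le_tower t, by simpa [regVec_empty] using by positivity⟩
  obtain ⟨H, hidx, hreg | hdens⟩ := exists_index_le_tower hA hε.le t
  · exact ⟨H, hidx, hreg⟩
  have hR0 : (0 : ℝ) < #R := pos_of_mul_pos_right (hAR' ▸ mod_cast hA.card_pos) hα.le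
  have hupper := dens_le_two_mul_card_div hA hAR fun v => hR H v (inv_mul_card_le_natCard hidx)
  rw [hAR', mul_div_mul_right _ _ hR0.ne'] at hupper
  have ht : 4 / α ^ 2 ≤ t * ε ^ 3 :=
    calc 4 / α ^ 2 = 4 * ε⁻¹ ^ 3 * α⁻¹ ^ 2 * ε ^ 3 := by field_simp
      _ ≤ t * ε ^ 3 := by gcongr; exact Nat.le_ceil _
  linarith [two_div_lt_one_add_four_div_sq α]

open Classical in
/-- Green-type regularity lemma for sparse Cayley graphs.  For
`α, ε ∈ (0,1)` there is `σ = σ(ε,α) > 0` such that for every `n`, every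
σ-regular set `R ⊆ F_p^n` (quantitatively: `|R_H^v| ≤ 2|R||H|/N` whenever
`|H| ≥ σN`) and every `A ⊆ R` with `|A| = α|R|`, there is a subspace `H` of
index at most `W(4ε^{-3}α^{-2})` which is ε-regular for `A` (at most `εN`
vectors fail to be ε-regular). -/
theorem green_regularity {p : ℕ} [NeZero p] (hp : p.Prime) (hodd : Odd p)
    (α ε : ℝ) (hα : 0 < α) (hα1 : α < 1) (hε : 0 < ε) (hε1 : ε < 1) :
    ∃ σ : ℝ, 0 < σ ∧
      ∀ (n : ℕ) (R A : Finset (Fin n → ZMod p)),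
        (∀ (H : Submodule (ZMod p) (Fin n → ZMod p)) (v : Fin n → ZMod p),
          σ * (Fintype.card (Fin n → ZMod p) : ℝ) ≤ (Nat.card H : ℝ) →
          (cardAH p n (↑R) H v : ℝ)
            ≤ 2 * R.card * (Nat.card H : ℝ) / (Fintype.card (Fin n → ZMod p) : ℝ)) →
        A ⊆ R → (A.card : ℝ) = α * R.card →
        ∃ H : Submodule (ZMod p) (Fin n → ZMod p),
          Nat.card ((Fin n → ZMod p) ⧸ H) ≤ tower p ⌈4 * ε⁻¹ ^ 3 * α⁻¹ ^ 2⌉₊ ∧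
          ((Finset.univ.filter
              (fun v : Fin n → ZMod p => ¬ regVec p n ε A H v)).card : ℝ)
            ≤ ε * (Fintype.card (Fin n → ZMod p) : ℝ) :=
  green_regularity_general α ε hα hε
end

section
/- Chernoff-type bound for random Fourier coefficients: Let V = F_p^n, N = |V|, 0 < q < 1, and let R ⊆ V be a random subset where each element is included independently with probability q, with qN = |R_expected| ≥ C N^{1/2} for a suitable constant. Then with probability 1 - o(1) (as N → ∞), sup_{ξ≠0} |1̂_R(ξ)| < qN / (N log N), where 1̂_R(ξ) = (1/N) Σ_{v∈V} 1_R(v) e(-⟨v,ξ⟩). Quantitatively, for fixed ξ ≠ 0, P(Re(N·1̂_R(ξ)) ≥ qN/log N) ≤ exp(-qN/(2 log^2 N)). -/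
open Finset

/-- The probability that an independent Bernoulli(q) random subset of `V` equals `S`:
`q^{|S|}(1-q)^{N-|S|}`. -/
noncomputable def bernoulliWeight (p n : ℕ) [NeZero p] (q : ℝ)
    (S : Finset (Fin n → ZMod p)) : ℝ :=
  q ^ S.card * (1 - q) ^ (Fintype.card (Fin n → ZMod p) - S.card)

/-! The exponential moment method with `t = 1 / log N` and `a = qN / log N`. With
`c v = Re e(-⟨v,ξ⟩)`, Markov's inequality and independence bound the probability by
`e^{-ta} ∏_v (q e^{t c v} + 1 - q) ≤ exp (-ta + q ∑_v (t c v + t² (c v)²))`, using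
`e^x ≤ 1 + x + x²` for `|x| ≤ 1`. Here `c v` is the real part of an additive character `ψ` with
`ψ ≠ 1` and, as `p` is odd, `ψ² ≠ 1`; orthogonality gives `∑ c v = 0` and `∑ (c v)² = N / 2`,
so the exponent is `-qN / log² N + qN / (2 log² N)`. -/

open Real

namespace AddChar

variable {G : Type*} [AddCommGroup G] [Fintype G]

lemma abs_re_apply_le_one (ψ : AddChar G ℂ) (x : G) : |(ψ x).re| ≤ 1 :=
  (Complex.abs_re_le_norm _).trans (ψ.norm_apply x).le

lemma sum_re_eq_zero {ψ : AddChar G ℂ} (hψ : ψ ≠ 1) : ∑ x, (ψ x).re = 0 := by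
  rw [← Complex.re_sum, sum_eq_zero_of_ne_one hψ, Complex.zero_re]

lemma sum_re_sq_eq_card_div_two {ψ : AddChar G ℂ} (hψ2 : ψ ^ 2 ≠ 1) :
    ∑ x, (ψ x).re ^ 2 = Fintype.card G / 2 := by
  have hsq : ∀ x, (ψ x).re ^ 2 = (1 + ((ψ ^ 2) x).re) / 2 := fun x ↦ by
    have hnorm : (ψ x).re ^ 2 + (ψ x).im ^ 2 = 1 := by
      rw [sq, sq, ← Complex.normSq_apply, Complex.normSq_eq_norm_sq, ψ.norm_apply, one_pow]
    rw [pow_apply, sq (ψ x), Complex.mul_re]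
    linarith
  simp_rw [hsq, ← sum_div, sum_add_distrib, sum_re_eq_zero hψ2]
  simp

end AddChar

lemma two_nsmul_ne_zero_of_odd {p n : ℕ} (hp : Odd p) {ξ : Fin n → ZMod p} (hξ : ξ ≠ 0) :
    2 • ξ ≠ 0 := by
  have h2 : IsUnit (2 : ZMod p) := by
    exact_mod_cast (ZMod.isUnit_iff_coprime 2 p).mpr (Nat.coprime_two_left.mpr hp)
  refine fun h ↦ hξ (funext fun i ↦ ?_)
  have hi := congrFun h i
  simp only [Pi.smul_apply, nsmul_eq_mul, Nat.cast_ofNat, Pi.zero_apply] at hi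
  exact h2.mul_right_eq_zero.mp hi

lemma three_le_card_of_odd {p n : ℕ} [NeZero p] (hp : Odd p) {ξ : Fin n → ZMod p}
    (hξ : ξ ≠ 0) : 3 ≤ Fintype.card (Fin n → ZMod p) := by
  have : Nontrivial (Fin n → ZMod p) := ⟨⟨ξ, 0, hξ⟩⟩
  have hgt : 1 < Fintype.card (Fin n → ZMod p) := Fintype.one_lt_card
  obtain ⟨k, hk⟩ : Odd (Fintype.card (Fin n → ZMod p)) := by
    rw [Fintype.card_fun, ZMod.card, Fintype.card_fin]
    exact hp.pow
  omega

section DotProductChar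

variable {p n : ℕ} [NeZero p]

noncomputable def dotProductChar (ξ : Fin n → ZMod p) : AddChar (Fin n → ZMod p) ℂ :=
  ZMod.stdAddChar.compAddMonoidHom
    (-AddMonoidHom.mk' (· ⬝ᵥ ξ) (fun u v ↦ add_dotProduct u v ξ))

lemma dotProductChar_apply (ξ v : Fin n → ZMod p) :
    dotProductChar ξ v = eC (-bracket p n v ξ) := by
  rw [dotProductChar, AddChar.compAddMonoidHom_apply, AddMonoidHom.neg_apply,
    AddChar.map_neg_eq_inv, ZMod.stdAddChar_apply, ZMod.toCircle_apply, eC, bracket]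
  push_cast
  rw [← Complex.exp_neg]
  congr 1
  simp [dotProduct]
  ring

lemma dotProductChar_pow (ξ : Fin n → ZMod p) (k : ℕ) :
    dotProductChar ξ ^ k = dotProductChar (k • ξ) := by
  ext v
  rw [AddChar.pow_apply, ← AddChar.map_nsmul_eq_pow]
  simp only [dotProductChar, AddChar.compAddMonoidHom_apply, AddMonoidHom.neg_apply,
    AddMonoidHom.mk'_apply, smul_dotProduct, dotProduct_smul]

lemma dotProductChar_ne_one {ξ : Fin n → ZMod p} (hξ : ξ ≠ 0) : dotProductChar ξ ≠ 1 := by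
  obtain ⟨i, hi⟩ := Function.ne_iff.mp hξ
  refine AddChar.ne_one_iff.mpr ⟨Pi.single i 1, ?_⟩
  rw [dotProductChar, AddChar.compAddMonoidHom_apply,
    ← (ZMod.stdAddChar (N := p)).map_zero_eq_one, ZMod.injective_stdAddChar.ne_iff]
  simpa [single_dotProduct] using hi

end DotProductChar

lemma one_le_log_of_three_le {x : ℝ} (hx : 3 ≤ x) : 1 ≤ log x := by
  rw [le_log_iff_exp_le (by linarith)]
  linarith [exp_one_lt_three]

lemma mul_exp_add_one_sub_le_exp {q x : ℝ} (hq : 0 ≤ q) (hx : |x| ≤ 1) :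
    q * exp x + (1 - q) ≤ exp (q * (x + x ^ 2)) := by
  have hquad : exp x ≤ 1 + x + x ^ 2 := by
    linarith [(abs_le.mp (abs_exp_sub_one_sub_id_le hx)).2]
  nlinarith [add_one_le_exp (q * (x + x ^ 2)), mul_le_mul_of_nonneg_left hquad hq]

lemma sum_filter_le_exp_mul_sum_exp {ι : Type*} (s : Finset ι) (w X : ι → ℝ)
    (hw : ∀ i ∈ s, 0 ≤ w i) {t : ℝ} (ht : 0 ≤ t) (a : ℝ) :
    ∑ i ∈ s with a ≤ X i, w i ≤ exp (-(t * a)) * ∑ i ∈ s, w i * exp (t * X i) := by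
  rw [mul_sum]
  calc ∑ i ∈ s with a ≤ X i, w i
      ≤ ∑ i ∈ s with a ≤ X i, exp (-(t * a)) * (w i * exp (t * X i)) := by
        refine sum_le_sum fun i hi ↦ ?_
        obtain ⟨his, hai⟩ := mem_filter.mp hi
        rw [mul_left_comm, ← exp_add]
        exact le_mul_of_one_le_right (hw i his) (one_le_exp (by nlinarith))
    _ ≤ ∑ i ∈ s, exp (-(t * a)) * (w i * exp (t * X i)) :=
        sum_le_sum_of_subset_of_nonneg (filter_subset _ _)
          fun i hi _ ↦ mul_nonneg (exp_pos _).le (mul_nonneg (hw i hi) (exp_pos _).le)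

section Bernoulli

variable {α : Type*} [Fintype α]

lemma sum_powerset_bernoulli_mul_prod (q : ℝ) (f : α → ℝ) :
    ∑ S ∈ univ.powerset, q ^ #S * (1 - q) ^ (Fintype.card α - #S) * ∏ v ∈ S, f v
      = ∏ v, (q * f v + (1 - q)) := by
  classical
  rw [prod_add]
  refine sum_congr rfl fun S _ ↦ ?_
  rw [prod_mul_distrib, prod_const, prod_const, card_sdiff_of_subset (subset_univ S), card_univ]
  ring

theorem bernoulli_chernoff (c : α → ℝ) (hc : ∀ v, |c v| ≤ 1) {q t : ℝ} (hq0 : 0 ≤ q)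
    (hq1 : q ≤ 1) (ht0 : 0 ≤ t) (ht1 : t ≤ 1) (a : ℝ) :
    ∑ S ∈ univ.powerset with a ≤ ∑ v ∈ S, c v, q ^ #S * (1 - q) ^ (Fintype.card α - #S)
      ≤ exp (-(t * a) + q * (t * ∑ v, c v + t ^ 2 * ∑ v, c v ^ 2)) := by
  have htc : ∀ v, |t * c v| ≤ 1 := fun v ↦ by
    rw [abs_mul, abs_of_nonneg ht0]
    nlinarith [hc v, abs_nonneg (c v)]
  have hq1' : 0 ≤ 1 - q := sub_nonneg.mpr hq1
  calc _ ≤ exp (-(t * a)) * ∑ S ∈ univ.powerset,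
        q ^ #S * (1 - q) ^ (Fintype.card α - #S) * exp (t * ∑ v ∈ S, c v) :=
        sum_filter_le_exp_mul_sum_exp _ _ _ (fun S _ ↦ by positivity) ht0 a
    _ = exp (-(t * a)) * ∏ v, (q * exp (t * c v) + (1 - q)) := by
        rw [← sum_powerset_bernoulli_mul_prod]
        refine congrArg _ (sum_congr rfl fun S _ ↦ ?_)
        rw [mul_sum, exp_sum]
    _ ≤ exp (-(t * a)) * ∏ v, exp (q * (t * c v + (t * c v) ^ 2)) := by
        gcongr with v
        exact mul_exp_add_one_sub_le_exp hq0 (htc v)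
    _ = _ := by
        rw [← exp_sum, ← exp_add, mul_sum, mul_sum, ← sum_add_distrib, mul_sum]
        congr 2
        exact sum_congr rfl fun v _ ↦ by ring

end Bernoulli

open Classical in
theorem chernoff_fourier_general {p : ℕ} [NeZero p] (hodd : Odd p) :
    ∃ C : ℝ, 0 < C ∧
      ∀ (n : ℕ) (q : ℝ), 0 < q → q < 1 →
        C * Real.sqrt (Fintype.card (Fin n → ZMod p) : ℝ)
          ≤ q * (Fintype.card (Fin n → ZMod p) : ℝ) →
        ∀ ξ : Fin n → ZMod p, ξ ≠ 0 →
          ∑ S ∈ (Finset.univ : Finset (Fin n → ZMod p)).powerset.filter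
              (fun S => q * (Fintype.card (Fin n → ZMod p) : ℝ)
                  / Real.log (Fintype.card (Fin n → ZMod p) : ℝ)
                ≤ (∑ v ∈ S, eC (-(bracket p n v ξ))).re),
            bernoulliWeight p n q S
          ≤ Real.exp (-(q * (Fintype.card (Fin n → ZMod p) : ℝ))
              / (2 * Real.log (Fintype.card (Fin n → ZMod p) : ℝ) ^ 2)) := by
  refine ⟨1, one_pos, fun n q hq0 hq1 _ ξ hξ ↦ ?_⟩
  set N := Fintype.card (Fin n → ZMod p)
  set ψ := dotProductChar ξ
  have hL : 1 ≤ log N := one_le_log_of_three_le (by exact_mod_cast three_le_card_of_odd hodd hξ)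
  have hre : ∀ S : Finset (Fin n → ZMod p),
      (∑ v ∈ S, eC (-bracket p n v ξ)).re = ∑ v ∈ S, (ψ v).re := fun S ↦ by
    simp only [Complex.re_sum, ψ, dotProductChar_apply]
  have hψ2 : ψ ^ 2 ≠ 1 := by
    rw [dotProductChar_pow]
    exact dotProductChar_ne_one (two_nsmul_ne_zero_of_odd hodd hξ)
  simp_rw [hre]
  refine (bernoulli_chernoff (fun v ↦ (ψ v).re) ψ.abs_re_apply_le_one hq0.le hq1.le
    (t := (log N)⁻¹) (by positivity) (inv_le_one_of_one_le₀ hL) _).trans_eq ?_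
  rw [AddChar.sum_re_eq_zero (dotProductChar_ne_one hξ), AddChar.sum_re_sq_eq_card_div_two hψ2]
  congr 1
  field_simp
  ring

open Classical in
/-- Chernoff-type bound for random Fourier coefficients.  There is a
constant `C > 0` such that for a Bernoulli(q) random subset `R` of `F_p^n` with
`qN ≥ C√N`, for every fixed `ξ ≠ 0` the probability that
`Re(N·1̂_R(ξ)) = Re Σ_{v∈R} e(-⟨v,ξ⟩)` is at least `qN/log N` is at most
`exp(-qN/(2 log² N))`. -/
theorem chernoff_fourier {p : ℕ} [NeZero p] (hp : p.Prime) (hodd : Odd p) :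
    ∃ C : ℝ, 0 < C ∧
      ∀ (n : ℕ) (q : ℝ), 0 < q → q < 1 →
        C * Real.sqrt (Fintype.card (Fin n → ZMod p) : ℝ)
          ≤ q * (Fintype.card (Fin n → ZMod p) : ℝ) →
        ∀ ξ : Fin n → ZMod p, ξ ≠ 0 →
          ∑ S ∈ (Finset.univ : Finset (Fin n → ZMod p)).powerset.filter
              (fun S => q * (Fintype.card (Fin n → ZMod p) : ℝ)
                  / Real.log (Fintype.card (Fin n → ZMod p) : ℝ)
                ≤ (∑ v ∈ S, eC (-(bracket p n v ξ))).re),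
            bernoulliWeight p n q S
          ≤ Real.exp (-(q * (Fintype.card (Fin n → ZMod p) : ℝ))
              / (2 * Real.log (Fintype.card (Fin n → ZMod p) : ℝ) ^ 2)) :=
  chernoff_fourier_general hodd
end

section
/- Roth's theorem in F_p^n with counting: For every δ > 0 there exists c(δ) > 0 such that every subset B of V = F_p^n (p an odd prime) with |B| ≥ δ|V| contains at least c(δ)|V|^2 three-term arithmetic progressions (triples (x,y,z) ∈ B^3 with x + z = 2y). -/
/-!
The Ruzsa–Szemerédi argument. Build the tripartite graph on three copies of `G` whose explicit
triangles are `(a, a + d, a + a + d)` for `a ∈ G`, `d ∈ B`. These `|G| |B|` triangles are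
edge-disjoint, so the graph is far from triangle-free and the triangle removal lemma yields
`≫ |G|³` triangles. A triangle `(a, b, c)` is exactly a choice of `b` together with the
progression `(2b - c, b - a, c - 2a)` in `B`, hence there are `≫ |G|²` progressions.
-/

open Finset SimpleGraph TripartiteFromTriangles Sum3

namespace ThreeAPCounting

variable {G : Type*} [AddCommGroup G] [Fintype G] [DecidableEq G]

def triangleIndices (B : Finset G) : Finset (G × G × G) :=
  (univ ×ˢ B).image fun x ↦ (x.1, x.1 + x.2, x.1 + x.1 + x.2)

variable {B : Finset G} {a b c : G}

@[simp]
lemma mk_mem_triangleIndices : (a, b, c) ∈ triangleIndices B ↔ b - a ∈ B ∧ c = a + b := by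
  simp only [triangleIndices, mem_image, mem_product, mem_univ, true_and, Prod.exists,
    Prod.mk.injEq]
  constructor
  · rintro ⟨a, d, hd, rfl, rfl, rfl⟩
    simpa [add_assoc] using hd
  · rintro ⟨hd, rfl⟩
    exact ⟨a, b - a, hd, rfl, by abel, by abel⟩

lemma card_triangleIndices : #(triangleIndices B) = Fintype.card G * #B := by
  rw [triangleIndices, card_image_of_injective, card_product, card_univ]
  intro x y h
  simp only [Prod.mk.injEq] at h
  exact Prod.ext h.1 (by simpa [h.1] using h.2.1)

instance : ExplicitDisjoint (triangleIndices B) := by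
  constructor <;> simp +contextual

lemma adj_in₀_in₁ : (graph (triangleIndices B)).Adj (in₀ a) (in₁ b) ↔ b - a ∈ B := by
  simp

lemma adj_in₀_in₂ : (graph (triangleIndices B)).Adj (in₀ a) (in₂ c) ↔ c - a - a ∈ B := by
  simp [eq_comm, ← sub_eq_iff_eq_add']

lemma adj_in₁_in₂ : (graph (triangleIndices B)).Adj (in₁ b) (in₂ c) ↔ b + b - c ∈ B := by
  simp [eq_comm, ← sub_eq_iff_eq_add, sub_sub_eq_add_sub]

lemma farFromTriangleFree_graph_triangleIndices {δ : ℝ} (hB : δ * Fintype.card G ≤ #B) :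
    (graph (triangleIndices B)).FarFromTriangleFree (δ / 9) := by
  refine farFromTriangleFree _ ?_
  rw [card_triangleIndices]
  push_cast
  calc δ / 9 * ((Fintype.card G : ℝ) + Fintype.card G + Fintype.card G) ^ 2
      = Fintype.card G * (δ * Fintype.card G) := by ring
    _ ≤ Fintype.card G * #B := by gcongr

def threeAPs (B : Finset G) : Finset (G × G × G) :=
  {t | t.1 ∈ B ∧ t.2.1 ∈ B ∧ t.2.2 ∈ B ∧ t.1 + t.2.2 = t.2.1 + t.2.1}

lemma card_cliqueFinset_graph_triangleIndices_le :
    #((graph (triangleIndices B)).cliqueFinset 3) ≤ Fintype.card G * #(threeAPs B) := by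
  rw [← card_univ, ← card_product]
  refine (card_le_card (t := (univ ×ˢ threeAPs B).image fun x ↦
    {in₀ (x.1 - x.2.2.1), in₁ x.1, in₂ (x.1 + x.1 - x.2.1)}) fun s hs ↦ ?_).trans card_image_le
  rw [mem_cliqueFinset_iff, is3Clique_iff] at hs
  obtain ⟨x, y, z, hxy, hxz, hyz, rfl⟩ := hs
  obtain ⟨a, b, c, habc, hab, hac, hbc⟩ := graph_triple hxy hxz hyz
  simp only [adj_in₀_in₁, adj_in₀_in₂, adj_in₁_in₂] at hab hac hbc
  refine mem_image.2 ⟨(b, b + b - c, b - a, c - a - a), ?_, ?_⟩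
  · simp only [threeAPs, mem_product, mem_univ, mem_filter, true_and]
    exact ⟨hbc, hab, hac, by abel⟩
  · rw [← habc, sub_sub_cancel, sub_sub_cancel]

theorem roth_3ap_counting {δ : ℝ} (hB : δ * Fintype.card G ≤ #B) :
    27 * triangleRemovalBound (δ / 9) * Fintype.card G ^ 2 ≤ #(threeAPs B) := by
  have hG : (0 : ℝ) < Fintype.card G := by exact_mod_cast Fintype.card_pos
  refine le_of_mul_le_mul_left ?_ hG
  calc (Fintype.card G : ℝ) * (27 * triangleRemovalBound (δ / 9) * Fintype.card G ^ 2)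
      = triangleRemovalBound (δ / 9) * (Fintype.card (G ⊕ G ⊕ G) : ℝ) ^ 3 := by
        simp only [Fintype.card_sum]; push_cast; ring
    _ ≤ (#((graph (triangleIndices B)).cliqueFinset 3) : ℝ) :=
        (farFromTriangleFree_graph_triangleIndices hB).le_card_cliqueFinset
    _ ≤ (Fintype.card G : ℝ) * #(threeAPs B) :=
        mod_cast card_cliqueFinset_graph_triangleIndices_le

end ThreeAPCounting

open Classical in
theorem roth_fpn_counting_general {p : ℕ} [NeZero p]
    (δ : ℝ) (hδ : 0 < δ) :
    ∃ c : ℝ, 0 < c ∧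
      ∀ (n : ℕ) (B : Finset (Fin n → ZMod p)),
        δ * (Fintype.card (Fin n → ZMod p) : ℝ) ≤ B.card →
        c * (Fintype.card (Fin n → ZMod p) : ℝ) ^ 2
          ≤ ((Finset.univ.filter (fun t : (Fin n → ZMod p) × (Fin n → ZMod p) × (Fin n → ZMod p) =>
              t.1 ∈ B ∧ t.2.1 ∈ B ∧ t.2.2 ∈ B ∧ t.1 + t.2.2 = t.2.1 + t.2.1)).card : ℝ) :=
  ⟨27 * triangleRemovalBound (δ / 9),
    mul_pos (by norm_num) (triangleRemovalBound_pos (by positivity)),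
    fun _ _ hB ↦ ThreeAPCounting.roth_3ap_counting hB⟩

open Classical in
/-- Roth's theorem in `F_p^n` with counting.  For a fixed odd prime
`p` and every `δ > 0` there is `c(δ) > 0` such that every `B ⊆ F_p^n` with
`|B| ≥ δ|V|` contains at least `c(δ)|V|²` three-term arithmetic progressions
(ordered triples `(x,y,z) ∈ B³` with `x + z = y + y`). -/
theorem roth_fpn_counting {p : ℕ} [NeZero p] (hp : p.Prime) (hodd : Odd p)
    (δ : ℝ) (hδ : 0 < δ) :
    ∃ c : ℝ, 0 < c ∧
      ∀ (n : ℕ) (B : Finset (Fin n → ZMod p)),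
        δ * (Fintype.card (Fin n → ZMod p) : ℝ) ≤ B.card →
        c * (Fintype.card (Fin n → ZMod p) : ℝ) ^ 2
          ≤ ((Finset.univ.filter (fun t : (Fin n → ZMod p) × (Fin n → ZMod p) × (Fin n → ZMod p) =>
              t.1 ∈ B ∧ t.2.1 ∈ B ∧ t.2.2 ∈ B ∧ t.1 + t.2.2 = t.2.1 + t.2.1)).card : ℝ) :=
  roth_fpn_counting_general δ hδ
end
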